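/- For λ = (λ_1,...,λ_m) ∈ ℂ^m, the reverse operations satisfy r^{λ_*} = ((r^{-1})_*)^{-λ} and (r^{-1})^λ = (r_*)^{-λ_*} for all r in the cone Ω of positive definite symmetric m×m matrices. -/

import Mathlib

open MeasureTheory Matrix
open scoped Real ENNReal NNReal

noncomputable section

abbrev Mat (n m : ℕ) := Matrix (Fin n) (Fin m) ℝ

instance (n m : ℕ) : MeasurableSpace (Mat n m) :=
  inferInstanceAs (MeasurableSpace (Fin n → Fin m → ℝ))

/-- Lebesgue measure on the space of real `n × m` matrices. -/
def matVolume (n m : ℕ) : Measure (Mat n m) :=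
  (volume : Measure (Fin n → Fin m → ℝ))

/-- Symmetric matrix built from independent coordinates `(i,j)`, `i ≤ j`. -/
def symOfCoords (m : ℕ) (c : {p : Fin m × Fin m // p.1 ≤ p.2} → ℝ) :
    Matrix (Fin m) (Fin m) ℝ :=
  Matrix.of fun i j => if h : i ≤ j then c ⟨(i, j), h⟩ else c ⟨(j, i), (le_total i j).resolve_left h⟩

/-- Lebesgue measure `dr = ∏_{i ≤ j} dr_{i,j}` on symmetric `m × m` matrices. -/
def symMeasure (m : ℕ) : Measure (Matrix (Fin m) (Fin m) ℝ) :=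
  Measure.map (symOfCoords m) volume

/-- Siegel gamma function (complex argument). -/
def SiegelGamma (m : ℕ) (α : ℂ) : ℂ :=
  (Real.pi : ℂ) ^ (((m : ℂ) * ((m : ℂ) - 1)) / 4) *
    ∏ j ∈ Finset.range m, Complex.Gamma (α - (j : ℂ) / 2)

/-- Siegel gamma function (real argument). -/
def SiegelGammaR (m : ℕ) (α : ℝ) : ℝ :=
  Real.pi ^ (((m : ℝ) * ((m : ℝ) - 1)) / 4) *
    ∏ j ∈ Finset.range m, Real.Gamma (α - (j : ℝ) / 2)

/-- `i`-th leading principal minor. -/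
def pminor {m : ℕ} (s : Matrix (Fin m) (Fin m) ℝ) (i : ℕ) : ℝ :=
  (Matrix.of fun a b : Fin (min i m) =>
    s (Fin.castLE (min_le_right i m) a) (Fin.castLE (min_le_right i m) b)).det

/-- Composite power function `s^λ` of the cone of positive definite matrices. -/
def cpowCone {m : ℕ} (s : Matrix (Fin m) (Fin m) ℝ) (lam : Fin m → ℂ) : ℂ :=
  ∏ i : Fin m, ((pminor s ((i : ℕ) + 1) / pminor s (i : ℕ) : ℝ) : ℂ) ^ (lam i / 2)

/-- Gamma function of the cone, for composite parameters. -/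
def GammaOmega (m : ℕ) (lam : Fin m → ℂ) : ℂ :=
  (Real.pi : ℂ) ^ (((m : ℂ) * ((m : ℂ) - 1)) / 4) *
    ∏ j : Fin m, Complex.Gamma ((lam j - (j : ℂ)) / 2)

/-- The antidiagonal permutation matrix ω. -/
def antidiag (m : ℕ) : Matrix (Fin m) (Fin m) ℝ :=
  Matrix.of fun i j => if j = i.rev then 1 else 0

/-- `μ` is the invariant probability measure of the Stiefel manifold `V_{n,m}`,
realized as a measure on the ambient matrix space. -/
def IsStiefelMeasure (n m : ℕ) (μ : Measure (Mat n m)) : Prop :=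
  IsProbabilityMeasure μ ∧ μ {v : Mat n m | vᵀ * v = 1}ᶜ = 0 ∧
    ∀ g : Mat n n, gᵀ * g = 1 → Measure.map (fun v : Mat n m => g * v) μ = μ

/-- A family of measures realizing the Funk transform: `ν u` is the normalized
invariant measure on `{w ∈ V_{n,q} : uᵀ w = 0}`. -/
def IsFunkFamily (n p q : ℕ) (ν : Mat n p → Measure (Mat n q)) : Prop :=
  (∀ u, IsProbabilityMeasure (ν u)) ∧
  (∀ u : Mat n p, ν u {w : Mat n q | wᵀ * w = 1 ∧ uᵀ * w = 0}ᶜ = 0) ∧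
  (∀ g : Mat n n, gᵀ * g = 1 → ∀ u, Measure.map (fun w : Mat n q => g * w) (ν u) = ν (g * u))


/-- Vertical block matrix `[a; b]` of sizes `(n-m) × m` over `m × m`. -/
def vblock (n m : ℕ) (a : Matrix (Fin (n - m)) (Fin m) ℝ)
    (b : Matrix (Fin m) (Fin m) ℝ) : Mat n m :=
  Matrix.of fun i j =>
    if hi : (i : ℕ) < n - m then a ⟨(i : ℕ), hi⟩ j
    else b ⟨(i : ℕ) - (n - m), by omega⟩ j

/-- The block frame `[[a, 0], [0, I_m]]` of size `n × k`. -/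
def blockFrame (n m k : ℕ) (a : Matrix (Fin (n - m)) (Fin (k - m)) ℝ) :
    Mat n k :=
  Matrix.of fun i j =>
    if hi : (i : ℕ) < n - m then
      if hj : (j : ℕ) < k - m then a ⟨(i : ℕ), hi⟩ ⟨(j : ℕ), hj⟩ else 0
    else if (i : ℕ) - (n - m) = (j : ℕ) - (k - m) ∧ ¬ ((j : ℕ) < k - m) then 1 else 0

/-- The cosine kernel `det(vᵀ u uᵀ v)^{(α-k)/2}`. -/
def cosineKer (n m k : ℕ) (α : ℂ) (u : Mat n k) (v : Mat n m) : ℂ :=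
  (((vᵀ * u * uᵀ * v).det : ℝ) : ℂ) ^ ((α - (k : ℂ)) / 2)

/-- The sine transform `Q^α` on `V_{n,m}`. -/
def sineT (n m : ℕ) (μm : Measure (Mat n m)) (α : ℂ) (f : Mat n m → ℂ)
    (u : Mat n m) : ℂ :=
  ∫ v, f v * (((1 - vᵀ * u * uᵀ * v).det : ℝ) : ℂ) ^ ((α + (m : ℂ) - (n : ℂ)) / 2) ∂μm

/-- The sine transform `S^α_{m,k}` from `V_{n,m}` to `V_{n,k}`. -/
def sineS (n m k : ℕ) (μm : Measure (Mat n m)) (α : ℂ) (f : Mat n m → ℂ)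
    (u : Mat n k) : ℂ :=
  ∫ v, f v * (((1 - vᵀ * u * uᵀ * v).det : ℝ) : ℂ) ^ ((α + (k : ℂ) - (n : ℂ)) / 2) ∂μm

/-- The cosine transform `M^α` on `V_{n,m}`. -/
def cosM (n m : ℕ) (μm : Measure (Mat n m)) (α : ℂ) (f : Mat n m → ℂ)
    (w : Mat n m) : ℂ :=
  ∫ v, f v * (((vᵀ * w * wᵀ * v).det : ℝ) : ℂ) ^ ((α - (m : ℂ)) / 2) ∂μm

/-
Jacobi's complementary minor identity says that the leading `i × i` minor of `r⁻¹` is the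
trailing `(m - i) × (m - i)` minor of `r` divided by `det r`, and conjugation by `ω` turns
trailing minors into leading ones. Hence the consecutive ratios `Δᵢ₊₁ / Δᵢ` for `r⁻¹` are the
reciprocals of those for `ω r ω`, read in reverse order; this is the second identity, and the
first is the second applied to `ω r ω`.
-/

namespace Matrix

variable {n p R : Type*} [Fintype n] [Fintype p] [DecidableEq n] [DecidableEq p] [CommRing R]

-- Jacobi's complementary minor identity; with `X = M⁻¹`,
-- `M * [[X₁₁, 0], [X₂₁, 1]] = [[1, M₁₂], [0, M₂₂]]`.
theorem det_mul_det_toBlocks₁₁_inv (M : Matrix (n ⊕ p) (n ⊕ p) R) (hM : IsUnit M.det) :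
    M.det * (M⁻¹).toBlocks₁₁.det = M.toBlocks₂₂.det := by
  have hcol : M * fromBlocks (M⁻¹).toBlocks₁₁ 0 (M⁻¹).toBlocks₂₁ 1
      = fromBlocks 1 M.toBlocks₁₂ 0 M.toBlocks₂₂ := by
    have h := M.mul_nonsing_inv hM
    generalize M⁻¹ = X at h ⊢
    rw [← fromBlocks_toBlocks M, ← fromBlocks_toBlocks X, fromBlocks_multiply,
      ← fromBlocks_one, fromBlocks_inj] at h
    rw [← fromBlocks_toBlocks M, fromBlocks_multiply]
    simp [h.1, h.2.2.1]
  simpa [det_fromBlocks_zero₁₂, det_fromBlocks_zero₂₁] using congrArg det hcol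

end Matrix

lemma Complex.ofReal_inv_cpow {x : ℝ} (hx : 0 ≤ x) (a : ℂ) :
    ((x⁻¹ : ℝ) : ℂ) ^ a = (x : ℂ) ^ (-a) := by
  rw [Complex.ofReal_inv, Complex.inv_cpow _ _ (by simp [Complex.arg_ofReal_of_nonneg hx,
    Real.pi_ne_zero.symm]), Complex.cpow_neg]

section antidiag

variable {m : ℕ}

lemma antidiag_mul_mul_antidiag (s : Matrix (Fin m) (Fin m) ℝ) :
    antidiag m * s * antidiag m = s.submatrix Fin.rev Fin.rev := by
  ext i j
  simp [antidiag, Matrix.mul_apply, eq_comm (a := j), Fin.rev_eq_iff]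

lemma antidiag_mul_mul_antidiag_involutive (s : Matrix (Fin m) (Fin m) ℝ) :
    antidiag m * (antidiag m * s * antidiag m) * antidiag m = s := by
  simp only [antidiag_mul_mul_antidiag, submatrix_submatrix, Fin.rev_involutive.comp_self,
    submatrix_id_id]

lemma inv_antidiag_mul_mul_antidiag (s : Matrix (Fin m) (Fin m) ℝ) :
    (antidiag m * s * antidiag m)⁻¹ = antidiag m * s⁻¹ * antidiag m := by
  simp only [antidiag_mul_mul_antidiag]
  exact inv_submatrix_equiv s Fin.revPerm Fin.revPerm

lemma Matrix.PosDef.antidiag_mul_mul_antidiag {s : Matrix (Fin m) (Fin m) ℝ}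
    (hs : s.PosDef) : (antidiag m * s * antidiag m).PosDef := by
  rw [_root_.antidiag_mul_mul_antidiag]
  exact hs.submatrix Fin.rev_injective

end antidiag

section pminor

variable {m : ℕ}

lemma pminor_eq_det_submatrix {i : ℕ} (s : Matrix (Fin m) (Fin m) ℝ) (hi : i ≤ m) :
    pminor s i = (s.submatrix (Fin.castLE hi) (Fin.castLE hi)).det := by
  rw [pminor, ← det_submatrix_equiv_self (finCongr (min_eq_left hi))]
  rfl

lemma pminor_pos {s : Matrix (Fin m) (Fin m) ℝ} (hs : s.PosDef) (i : ℕ) : 0 < pminor s i :=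
  (hs.submatrix (Fin.castLE_injective _)).det_pos

lemma pminor_inv_mul_det {i : ℕ} {r : Matrix (Fin m) (Fin m) ℝ} (hr : r.det ≠ 0)
    (hi : i ≤ m) : pminor r⁻¹ i * r.det = pminor (antidiag m * r * antidiag m) (m - i) := by
  set e : Fin i ⊕ Fin (m - i) ≃ Fin m :=
    finSumFinEquiv.trans (finCongr (Nat.add_sub_cancel' hi))
  have hblock := (r.submatrix e e).det_mul_det_toBlocks₁₁_inv
    (by rwa [det_submatrix_equiv_self, isUnit_iff_ne_zero])
  rw [det_submatrix_equiv_self, inv_submatrix_equiv] at hblock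
  have h₁₁ : (r⁻¹.submatrix e e).toBlocks₁₁
      = r⁻¹.submatrix (Fin.castLE hi) (Fin.castLE hi) := rfl
  have h₂₂ : (r.submatrix e e).toBlocks₂₂.submatrix Fin.revPerm Fin.revPerm
      = (r.submatrix Fin.rev Fin.rev).submatrix (Fin.castLE (Nat.sub_le m i))
          (Fin.castLE (Nat.sub_le m i)) := by
    ext a b
    simp only [submatrix_apply, toBlocks₂₂, of_apply]
    congr 1 <;> ext <;>
      simp only [e, Fin.revPerm_apply, Equiv.trans_apply, finSumFinEquiv_apply_right,
        finCongr_apply, Fin.val_cast, Fin.val_natAdd, Fin.val_rev, Fin.val_castLE] <;> omega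
  rw [pminor_eq_det_submatrix _ hi, pminor_eq_det_submatrix _ (Nat.sub_le m i),
    antidiag_mul_mul_antidiag, ← h₂₂, det_submatrix_equiv_self, mul_comm, ← h₁₁, hblock]

lemma pminor_inv_div_pminor_inv {r : Matrix (Fin m) (Fin m) ℝ} (hr : r.det ≠ 0) (j : Fin m) :
    pminor r⁻¹ (j + 1) / pminor r⁻¹ j
      = (pminor (antidiag m * r * antidiag m) (j.rev + 1)
          / pminor (antidiag m * r * antidiag m) j.rev)⁻¹ := by
  have hrev : (j.rev : ℕ) = m - (j + 1) := Fin.val_rev j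
  have hrev_succ : (j.rev : ℕ) + 1 = m - j := by omega
  rw [hrev_succ, hrev, inv_div, ← pminor_inv_mul_det hr j.isLt,
    ← pminor_inv_mul_det hr j.isLt.le, mul_div_mul_right _ _ hr]

end pminor

lemma cpowCone_inv {m : ℕ} {r : Matrix (Fin m) (Fin m) ℝ} (hr : r.PosDef) (lam : Fin m → ℂ) :
    cpowCone r⁻¹ lam = cpowCone (antidiag m * r * antidiag m) (fun j => -(lam j.rev)) := by
  have hW := hr.antidiag_mul_mul_antidiag
  refine Fintype.prod_equiv Fin.revPerm _ _ fun j => ?_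
  rw [pminor_inv_div_pminor_inv hr.det_pos.ne' j,
    Complex.ofReal_inv_cpow (div_pos (pminor_pos hW _) (pminor_pos hW _)).le]
  simp [neg_div]

theorem cpow_cone_reverse_general (m : ℕ) (lam : Fin m → ℂ)
    (r : Matrix (Fin m) (Fin m) ℝ) (hr : r.PosDef) :
    cpowCone r (fun j => lam j.rev)
        = cpowCone (antidiag m * r⁻¹ * antidiag m) (fun j => -(lam j)) ∧
    cpowCone r⁻¹ lam
        = cpowCone (antidiag m * r * antidiag m) (fun j => -(lam j.rev)) := by
  refine ⟨?_, cpowCone_inv hr lam⟩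
  simpa [inv_antidiag_mul_mul_antidiag, antidiag_mul_mul_antidiag_involutive] using
    (cpowCone_inv hr.antidiag_mul_mul_antidiag fun j => -(lam j)).symm

theorem cpow_cone_reverse (m : ℕ) (lam : Fin m → ℂ)
    (r : Matrix (Fin m) (Fin m) ℝ) (hr : r.PosDef) (hrs : r.IsSymm) :
    cpowCone r (fun j => lam j.rev)
        = cpowCone (antidiag m * r⁻¹ * antidiag m) (fun j => -(lam j)) ∧
    cpowCone r⁻¹ lam
        = cpowCone (antidiag m * r * antidiag m) (fun j => -(lam j.rev)) :=
  cpow_cone_reverse_general m lam r hr
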